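/- For every ε > 0 and for all 1 ≤ i ≤ n, Σ_{k=1}^{n} σ_0(gcd(i,k))·σ(k)/k = n·Σ_{d | i} c_d/d + O_ε(n^ε), where c_d = Σ_{m=1}^{∞} gcd(m,d)/m². -/

import Mathlib

open Finset


lemma divisor_bound (δ : ℝ) (hδ : 0 < δ) :
    ∃ C : ℝ, 1 ≤ C ∧ ∀ i : ℕ, 1 ≤ i → (i.divisors.card : ℝ) ≤ C * (i : ℝ) ^ δ := by
  have hlog2 : 0 < Real.log 2 := Real.log_pos one_lt_two
  set B : ℝ := max 1 (1 / (δ * Real.log 2)) with hBdef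
  have hB1 : 1 ≤ B := le_max_left _ _
  have hB0 : 0 ≤ B := by linarith
  have hB2 : 1 ≤ B * (δ * Real.log 2) := by
    have h1 : 1 / (δ * Real.log 2) ≤ B := le_max_right _ _
    have h2 : 0 < δ * Real.log 2 := by positivity
    rw [div_le_iff₀ h2] at h1
    linarith
  set P : ℕ := ⌈(2:ℝ) ^ (1/δ)⌉₊ with hPdef
  refine ⟨B ^ (P + 1), one_le_pow₀ hB1, ?_⟩
  intro i hi
  have hi0 : i ≠ 0 := by omega
  have claim : ∀ p ∈ i.primeFactors,
      ((i.factorization p : ℝ) + 1) ≤ (if p ≤ P then B else 1) * ((p:ℝ) ^ δ) ^ (i.factorization p) := by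
    intro p hp
    have hpp : p.Prime := Nat.prime_of_mem_primeFactors hp
    have hp2 : (2:ℝ) ≤ (p:ℝ) := by exact_mod_cast hpp.two_le
    have hp0 : (0:ℝ) ≤ (p:ℝ) := by linarith
    set a : ℕ := i.factorization p with ha
    by_cases hsmall : p ≤ P
    · rw [if_pos hsmall]
      have h2δ : (2:ℝ) ^ ((a:ℝ) * δ) ≤ ((p:ℝ) ^ δ) ^ a := by
        rw [← Real.rpow_natCast ((p:ℝ)^δ) a, ← Real.rpow_mul hp0, mul_comm δ (a:ℝ)]
        exact Real.rpow_le_rpow (by norm_num) hp2 (by positivity)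
      have hexp : Real.log 2 * ((a:ℝ) * δ) + 1 ≤ (2:ℝ) ^ ((a:ℝ) * δ) := by
        rw [Real.rpow_def_of_pos two_pos]
        exact Real.add_one_le_exp _
      have hnn : (0:ℝ) ≤ (a:ℝ) := Nat.cast_nonneg a
      nlinarith [mul_le_mul_of_nonneg_left h2δ hB0,
        mul_le_mul_of_nonneg_left hexp hB0]
    · rw [if_neg hsmall, one_mul]
      have hPp : ((2:ℝ) ^ (1/δ)) ≤ (p:ℝ) := by
        have hlt : P < p := by omega
        have hc : ((P:ℕ):ℝ) ≤ (p:ℝ) := by exact_mod_cast hlt.le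
        linarith [Nat.le_ceil ((2:ℝ) ^ (1/δ))]
      have h2 : (2:ℝ) ≤ (p:ℝ) ^ δ := by
        calc (2:ℝ) = ((2:ℝ) ^ (1/δ)) ^ δ := by
              rw [← Real.rpow_mul (by norm_num), one_div_mul_cancel hδ.ne', Real.rpow_one]
          _ ≤ (p:ℝ) ^ δ := Real.rpow_le_rpow (by positivity) hPp hδ.le
      have base : a + 1 ≤ 2 ^ a := Nat.lt_two_pow_self
      calc ((a:ℝ) + 1) ≤ (2:ℝ) ^ a := by exact_mod_cast base
        _ ≤ ((p:ℝ) ^ δ) ^ a := pow_le_pow_left₀ (by norm_num) h2 a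
  -- assemble product
  have hcard : (i.divisors.card : ℝ) = ∏ p ∈ i.primeFactors, ((i.factorization p : ℝ) + 1) := by
    rw [Nat.card_divisors hi0]
    push_cast
    rfl
  have hprod : (i.divisors.card : ℝ) ≤
      (∏ p ∈ i.primeFactors, (if p ≤ P then B else 1)) *
        ∏ p ∈ i.primeFactors, ((p:ℝ) ^ δ) ^ (i.factorization p) := by
    rw [hcard, ← Finset.prod_mul_distrib]
    refine Finset.prod_le_prod (fun p _ => by positivity) claim
  have hpow : ∏ p ∈ i.primeFactors, ((p:ℝ) ^ δ) ^ (i.factorization p) = (i:ℝ) ^ δ := by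
    have : ∀ p ∈ i.primeFactors, ((p:ℝ) ^ δ) ^ (i.factorization p)
        = (((p ^ i.factorization p : ℕ)):ℝ) ^ δ := by
      intro p hp
      have hp0 : (0:ℝ) ≤ (p:ℝ) := Nat.cast_nonneg p
      rw [← Real.rpow_natCast ((p:ℝ)^δ) _, ← Real.rpow_mul hp0, mul_comm,
        Real.rpow_mul hp0, Real.rpow_natCast]
      push_cast
      rfl
    rw [Finset.prod_congr rfl this, Real.finset_prod_rpow _ _ (fun p _ => by positivity)]
    congr 1
    rw [← Nat.cast_prod]
    congr 1
    conv_rhs => rw [← Nat.factorization_prod_pow_eq_self hi0]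
    rw [Finsupp.prod, Nat.support_factorization]
  have hw : (∏ p ∈ i.primeFactors, (if p ≤ P then B else 1)) ≤ B ^ (P + 1) := by
    rw [Finset.prod_ite, Finset.prod_const, Finset.prod_const, one_pow, mul_one]
    refine pow_le_pow_right₀ hB1 ?_
    have : Finset.filter (fun p => p ≤ P) i.primeFactors ⊆ Finset.range (P+1) := by
      intro p hp
      simp only [Finset.mem_filter] at hp
      simp [Nat.lt_succ_iff, hp.2]
    calc _ ≤ (Finset.range (P+1)).card := Finset.card_le_card this
      _ = P + 1 := Finset.card_range _
  calc (i.divisors.card : ℝ) ≤ _ := hprod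
    _ = (∏ p ∈ i.primeFactors, (if p ≤ P then B else 1)) * (i:ℝ) ^ δ := by rw [hpow]
    _ ≤ B ^ (P+1) * (i:ℝ) ^ δ := by
        refine mul_le_mul_of_nonneg_right hw (by positivity)

/-- `c_d = ∑_{m=1}^{∞} gcd(m,d)/m²`. -/
noncomputable def cc (l : ℕ) : ℝ := ∑' m : ℕ, (Nat.gcd (m + 1) l : ℝ) / ((m + 1 : ℕ) ^ 2)

lemma g_summable (e : ℕ) : Summable (fun m : ℕ => ((m+1:ℝ) * (Nat.lcm e (m+1) : ℝ))⁻¹) := by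
  have h2 : Summable (fun n : ℕ => ((n:ℝ)^2)⁻¹) := Real.summable_nat_pow_inv.mpr one_lt_two
  have h1 : Summable (fun m : ℕ => (((m:ℝ)+1)^2)⁻¹) := by
    have := (summable_nat_add_iff (f := fun n : ℕ => ((n:ℝ)^2)⁻¹) 1).2 h2
    simpa using this
  refine Summable.of_nonneg_of_le (fun m => by positivity) (fun m => ?_) h1
  rcases Nat.eq_zero_or_pos (Nat.lcm e (m+1)) with h | h
  · rw [h]; simp; positivity
  · have hle : (m+1:ℕ) ≤ Nat.lcm e (m+1) := Nat.le_of_dvd h (Nat.dvd_lcm_right _ _)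
    have hle' : ((m:ℝ)+1) ≤ (Nat.lcm e (m+1) : ℝ) := by exact_mod_cast hle
    rw [pow_two]
    exact inv_anti₀ (by positivity) (by nlinarith)

lemma cc_div (e : ℕ) (he : 0 < e) :
    cc e / e = ∑' m : ℕ, ((m+1:ℝ) * (Nat.lcm e (m+1) : ℝ))⁻¹ := by
  rw [cc, ← tsum_div_const]
  refine tsum_congr fun m => ?_
  have key : (Nat.gcd (m+1) e : ℝ) * (Nat.lcm (m+1) e : ℝ) = ((m:ℝ)+1) * e := by
    exact_mod_cast congrArg (Nat.cast : ℕ → ℝ) (Nat.gcd_mul_lcm (m+1) e)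
  have hG : 0 < (Nat.gcd (m+1) e : ℝ) := by
    have : 0 < Nat.gcd (m+1) e := Nat.gcd_pos_of_pos_left e (Nat.succ_pos m)
    exact_mod_cast this
  have hL : 0 < (Nat.lcm (m+1) e : ℝ) := by
    have : 0 < Nat.lcm (m+1) e := Nat.pos_of_ne_zero (Nat.lcm_ne_zero (Nat.succ_ne_zero m) he.ne')
    exact_mod_cast this
  have hm : (0:ℝ) < (m:ℝ)+1 := by positivity
  have he' : (0:ℝ) < (e:ℝ) := by exact_mod_cast he
  rw [Nat.lcm_comm e (m+1)]
  push_cast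
  rw [div_div]
  rw [div_eq_iff (by positivity), inv_mul_eq_div, eq_div_iff (by positivity)]
  nlinarith [key]

lemma tail_bound (n e : ℕ) (hn : 1 ≤ n) (he : 0 < e) :
    ∑' m : ℕ, ((((m+n):ℝ)+1) * (Nat.lcm e ((m+n)+1) : ℝ))⁻¹ ≤ (n:ℝ)⁻¹ := by
  have hnR : (0:ℝ) < n := by exact_mod_cast hn
  refine Real.tsum_le_of_sum_range_le (fun m => by positivity) (fun N => ?_)
  have hterm : ∀ m : ℕ, ((((m+n):ℝ)+1) * (Nat.lcm e ((m+n)+1) : ℝ))⁻¹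
      ≤ ((m+n:ℝ))⁻¹ - ((m+1+n:ℝ))⁻¹ := by
    intro m
    have hm : (0:ℝ) < (m:ℝ) + n := by positivity
    have hL : (m+n+1:ℕ) ≤ Nat.lcm e (m+n+1) :=
      Nat.le_of_dvd (Nat.pos_of_ne_zero (Nat.lcm_ne_zero he.ne' (Nat.succ_ne_zero _)))
        (Nat.dvd_lcm_right _ _)
    have hL' : ((m:ℝ)+n+1) ≤ (Nat.lcm e (m+n+1) : ℝ) := by
      have h2 : (((m+n+1 : ℕ)):ℝ) ≤ (Nat.lcm e (m+n+1) : ℝ) := by exact_mod_cast hL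
      push_cast at h2
      linarith
    have step : ((((m+n):ℝ)+1) * (Nat.lcm e ((m+n)+1) : ℝ))⁻¹
        ≤ (((m:ℝ)+n) * ((m:ℝ)+n+1))⁻¹ := by
      push_cast
      exact inv_anti₀ (by positivity) (by nlinarith)
    have tele : (((m:ℝ)+n) * ((m:ℝ)+n+1))⁻¹ = ((m+n:ℝ))⁻¹ - ((m+1+n:ℝ))⁻¹ := by
      rw [eq_sub_iff_add_eq]
      push_cast
      field_simp
      ring
    push_cast at step tele ⊢
    linarith
  calc ∑ m ∈ Finset.range N, ((((m+n):ℝ)+1) * (Nat.lcm e ((m+n)+1) : ℝ))⁻¹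
      ≤ ∑ m ∈ Finset.range N, (((m+n:ℝ))⁻¹ - ((m+1+n:ℝ))⁻¹) :=
        Finset.sum_le_sum fun m _ => hterm m
    _ = ((0+n:ℝ))⁻¹ - ((N+n:ℝ))⁻¹ := by
        have := Finset.sum_range_sub' (fun m : ℕ => ((m+n:ℝ))⁻¹) N
        simp only [Nat.cast_add, Nat.cast_one] at this ⊢
        convert this using 2 <;> push_cast <;> ring_nf
    _ ≤ (n:ℝ)⁻¹ := by
        simp only [zero_add]
        have : (0:ℝ) ≤ ((N+n:ℝ))⁻¹ := by positivity
        linarith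

lemma per_e (n e : ℕ) (hn : 1 ≤ n) (he : 0 < e) :
    |(∑ d ∈ Finset.Icc 1 n, (d:ℝ)⁻¹ * ((n / Nat.lcm e d : ℕ):ℝ)) - n * (cc e / e)|
      ≤ 2 + Real.log n := by
  set g : ℕ → ℝ := fun m => ((m+1:ℝ) * (Nat.lcm e (m+1) : ℝ))⁻¹ with hg
  have hgs := g_summable e
  have hsplit : (∑ m ∈ Finset.range n, g m) + ∑' m, g (m + n) = ∑' m, g m :=
    Summable.sum_add_tsum_nat_add n hgs
  have hnR : (0:ℝ) < n := by exact_mod_cast hn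
  have hT : (∑ d ∈ Finset.Icc 1 n, (d:ℝ)⁻¹ * ((n / Nat.lcm e d : ℕ):ℝ))
      = ∑ m ∈ Finset.range n, ((m:ℝ)+1)⁻¹ * ((n / Nat.lcm e (m+1) : ℕ):ℝ) := by
    rw [← Finset.Ico_add_one_right_eq_Icc, Finset.sum_Ico_eq_sum_range]
    refine Finset.sum_congr rfl fun m _ => ?_
    rw [add_comm 1 m]
    push_cast
    ring_nf
  have key1 : ∀ m ∈ Finset.range n,
      |((m:ℝ)+1)⁻¹ * ((n / Nat.lcm e (m+1) : ℕ):ℝ) - n * g m| ≤ ((m:ℝ)+1)⁻¹ := by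
    intro m _
    set L := Nat.lcm e (m+1) with hLdef
    have hLpos : 0 < L := Nat.pos_of_ne_zero (Nat.lcm_ne_zero he.ne' (Nat.succ_ne_zero m))
    have hLR : (0:ℝ) < L := by exact_mod_cast hLpos
    have hfloor_le : ((n / L : ℕ):ℝ) ≤ (n:ℝ)/L := Nat.cast_div_le
    have hlt : (n:ℝ)/L < ((n / L : ℕ):ℝ) + 1 := by
      rw [div_lt_iff₀ hLR]
      have h := Nat.lt_mul_div_succ n hLpos
      calc (n:ℝ) < ((L * (n / L + 1) : ℕ) : ℝ) := by exact_mod_cast h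
        _ = (((n / L : ℕ):ℝ) + 1) * L := by push_cast; ring
    have hng : (n:ℝ) * g m = ((m:ℝ)+1)⁻¹ * ((n:ℝ)/L) := by
      rw [hg]
      simp only
      rw [mul_inv]
      ring
    rw [hng, ← mul_sub, abs_mul, abs_of_nonneg (by positivity : (0:ℝ) ≤ ((m:ℝ)+1)⁻¹)]
    have habs : |((n / L : ℕ):ℝ) - (n:ℝ)/L| ≤ 1 := by
      rw [abs_le]; constructor <;> linarith
    exact (mul_le_mul_of_nonneg_left habs (by positivity)).trans (le_of_eq (mul_one _))
  have harm : ∑ m ∈ Finset.range n, ((m:ℝ)+1)⁻¹ ≤ 1 + Real.log n := by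
    have h := harmonic_le_one_add_log n
    have heq : ((harmonic n : ℚ) : ℝ) = ∑ m ∈ Finset.range n, ((m:ℝ)+1)⁻¹ := by
      rw [harmonic]
      push_cast
      rfl
    linarith [heq ▸ h]
  have htail : ∑' m, g (m + n) ≤ (n:ℝ)⁻¹ := by
    have h := tail_bound n e hn he
    refine le_trans (le_of_eq (tsum_congr fun m => ?_)) h
    rw [hg]
    push_cast
    ring_nf
  have htail0 : (0:ℝ) ≤ ∑' m, g (m + n) := tsum_nonneg fun m => by positivity
  rw [hT, cc_div e he, ← hsplit]
  have expand : (∑ m ∈ Finset.range n, ((m:ℝ)+1)⁻¹ * ((n / Nat.lcm e (m+1) : ℕ):ℝ))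
      - n * ((∑ m ∈ Finset.range n, g m) + ∑' m, g (m + n))
      = (∑ m ∈ Finset.range n, (((m:ℝ)+1)⁻¹ * ((n / Nat.lcm e (m+1) : ℕ):ℝ) - n * g m))
        - n * ∑' m, g (m + n) := by
    rw [Finset.sum_sub_distrib, mul_add, Finset.mul_sum]
    ring
  rw [expand]
  have h1 : |∑ m ∈ Finset.range n, (((m:ℝ)+1)⁻¹ * ((n / Nat.lcm e (m+1) : ℕ):ℝ) - n * g m)|
      ≤ 1 + Real.log n :=
    le_trans (Finset.abs_sum_le_sum_abs _ _) (le_trans (Finset.sum_le_sum key1) harm)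
  have h2 : |(n:ℝ) * ∑' m, g (m + n)| ≤ 1 := by
    rw [abs_of_nonneg (by positivity)]
    calc (n:ℝ) * ∑' m, g (m + n) ≤ (n:ℝ) * (n:ℝ)⁻¹ :=
          mul_le_mul_of_nonneg_left htail hnR.le
      _ = 1 := mul_inv_cancel₀ hnR.ne'
  calc |_| ≤ _ + _ := abs_sub _ _
    _ ≤ 2 + Real.log n := by linarith


lemma divisors_eq_filter (n k : ℕ) (h1 : 1 ≤ k) (h2 : k ≤ n) :
    k.divisors = (Finset.Icc 1 n).filter (· ∣ k) := by
  ext d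
  simp only [Nat.mem_divisors, Finset.mem_filter, Finset.mem_Icc]
  constructor
  · rintro ⟨hd, -⟩
    exact ⟨⟨Nat.pos_of_dvd_of_pos hd h1, le_trans (Nat.le_of_dvd h1 hd) h2⟩, hd⟩
  · rintro ⟨-, hd⟩
    exact ⟨hd, by omega⟩

lemma gcd_divisors_eq (i k : ℕ) (hi : 1 ≤ i) :
    (Nat.gcd i k).divisors = i.divisors.filter (· ∣ k) := by
  ext d
  have hne : Nat.gcd i k ≠ 0 := fun h => by
    rw [Nat.gcd_eq_zero_iff] at h; omega
  simp only [Nat.mem_divisors, Finset.mem_filter, Nat.dvd_gcd_iff]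
  constructor
  · rintro ⟨⟨h1, h2⟩, -⟩
    exact ⟨⟨h1, by omega⟩, h2⟩
  · rintro ⟨⟨h1, -⟩, h2⟩
    exact ⟨⟨h1, h2⟩, hne⟩

lemma sigma1_div (k : ℕ) (hk : 1 ≤ k) :
    (ArithmeticFunction.sigma 1 k : ℝ) / k = ∑ d ∈ k.divisors, (d:ℝ)⁻¹ := by
  have hk0 : (0:ℝ) < k := by exact_mod_cast hk
  rw [ArithmeticFunction.sigma_one_apply]
  have h1 : (∑ d ∈ k.divisors, d) = ∑ d ∈ k.divisors, (k / d) :=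
    (Nat.sum_div_divisors k id).symm
  have h2 : ∑ d ∈ k.divisors, ((k / d : ℕ) : ℝ) = ∑ d ∈ k.divisors, (k:ℝ) * (d:ℝ)⁻¹ := by
    refine Finset.sum_congr rfl fun d hd => ?_
    have hdk := (Nat.mem_divisors.mp hd).1
    have hdpos := Nat.pos_of_mem_divisors hd
    have hd0 : (d:ℝ) ≠ 0 := by positivity
    rw [Nat.cast_div hdk hd0, div_eq_mul_inv]
  rw [div_eq_iff hk0.ne']
  calc ((∑ d ∈ k.divisors, d : ℕ) : ℝ) = ((∑ d ∈ k.divisors, (k / d) : ℕ) : ℝ) := by rw [h1]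
    _ = ∑ d ∈ k.divisors, ((k/d : ℕ):ℝ) := by push_cast; rfl
    _ = ∑ d ∈ k.divisors, (k:ℝ) * (d:ℝ)⁻¹ := h2
    _ = (∑ d ∈ k.divisors, (d:ℝ)⁻¹) * k := by rw [← Finset.mul_sum]; ring

lemma sum_identity (n i : ℕ) (hi : 1 ≤ i) (hin : i ≤ n) :
    ∑ k ∈ Finset.Icc 1 n, (ArithmeticFunction.sigma 0 (Nat.gcd i k) : ℝ) * (ArithmeticFunction.sigma 1 k : ℝ) / k
      = ∑ e ∈ i.divisors, ∑ d ∈ Finset.Icc 1 n, (d:ℝ)⁻¹ * ((n / Nat.lcm e d : ℕ):ℝ) := by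
  have step1 : ∀ k ∈ Finset.Icc 1 n,
      (ArithmeticFunction.sigma 0 (Nat.gcd i k) : ℝ) * (ArithmeticFunction.sigma 1 k : ℝ) / k
      = ∑ e ∈ i.divisors, ∑ d ∈ Finset.Icc 1 n, (if Nat.lcm e d ∣ k then (d:ℝ)⁻¹ else 0) := by
    intro k hk
    rw [Finset.mem_Icc] at hk
    have hk1 := hk.1
    have hb : (ArithmeticFunction.sigma 1 k : ℝ) / k
        = ∑ d ∈ Finset.Icc 1 n, (if d ∣ k then (d:ℝ)⁻¹ else 0) := by
      rw [sigma1_div k hk1, divisors_eq_filter n k hk1 hk.2, Finset.sum_filter]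
    have hc : (ArithmeticFunction.sigma 0 (Nat.gcd i k) : ℝ)
        = ∑ e ∈ i.divisors, (if e ∣ k then (1:ℝ) else 0) := by
      rw [ArithmeticFunction.sigma_zero_apply, gcd_divisors_eq i k hi]
      rw [Finset.sum_boole]
    rw [mul_div_assoc, hb, hc, Finset.sum_mul_sum]
    refine Finset.sum_congr rfl fun e _ => Finset.sum_congr rfl fun d _ => ?_
    by_cases h1 : e ∣ k <;> by_cases h2 : d ∣ k <;>
      simp [h1, h2, Nat.lcm_dvd_iff]
  rw [Finset.sum_congr rfl step1, Finset.sum_comm]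
  refine Finset.sum_congr rfl fun e _ => ?_
  rw [Finset.sum_comm]
  refine Finset.sum_congr rfl fun d _ => ?_
  rw [← Finset.sum_filter, Finset.sum_const, show Finset.Icc 1 n = Finset.Ioc 0 n from rfl,
    Nat.Ioc_filter_dvd_card_eq_div, nsmul_eq_mul]
  ring

/-- For all `1 ≤ i ≤ n`, `∑_{k=1}^{n} σ₀(gcd(i,k))·σ(k)/k = n·∑_{d ∣ i} c_d/d + O_ε(n^ε)`,
uniformly in `i`. -/
theorem row_asymptotic (ε : ℝ) (hε : 0 < ε) : ∃ C : ℝ, ∀ n i : ℕ, 1 ≤ i → i ≤ n →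
    |∑ k ∈ Finset.Icc 1 n, (ArithmeticFunction.sigma 0 (Nat.gcd i k) : ℝ) * (ArithmeticFunction.sigma 1 k : ℝ) / k
      - n * ∑ d ∈ i.divisors, cc d / d| ≤ C * (n : ℝ) ^ ε := by
  obtain ⟨C₁, hC₁1, hC₁⟩ := divisor_bound (ε/2) (half_pos hε)
  refine ⟨C₁ * (2 + 2/ε), ?_⟩
  intro n i hi hin
  have hn : 1 ≤ n := le_trans hi hin
  have hnR : (0:ℝ) < n := by exact_mod_cast hn
  have hnR1 : (1:ℝ) ≤ n := by exact_mod_cast hn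
  have hlogn : 0 ≤ Real.log n := Real.log_nonneg hnR1
  rw [sum_identity n i hi hin, Finset.mul_sum, ← Finset.sum_sub_distrib]
  have hbound : ∀ e ∈ i.divisors,
      |(∑ d ∈ Finset.Icc 1 n, (d:ℝ)⁻¹ * ((n / Nat.lcm e d : ℕ):ℝ)) - n * (cc e / e)|
        ≤ 2 + Real.log n :=
    fun e he => per_e n e hn (Nat.pos_of_mem_divisors he)
  have h1 : |∑ e ∈ i.divisors,
      ((∑ d ∈ Finset.Icc 1 n, (d:ℝ)⁻¹ * ((n / Nat.lcm e d : ℕ):ℝ)) - n * (cc e / e))|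
      ≤ (i.divisors.card : ℝ) * (2 + Real.log n) := by
    refine le_trans (Finset.abs_sum_le_sum_abs _ _) ?_
    calc ∑ e ∈ i.divisors,
        |(∑ d ∈ Finset.Icc 1 n, (d:ℝ)⁻¹ * ((n / Nat.lcm e d : ℕ):ℝ)) - n * (cc e / e)|
        ≤ ∑ _e ∈ i.divisors, (2 + Real.log n) := Finset.sum_le_sum hbound
      _ = (i.divisors.card : ℝ) * (2 + Real.log n) := by
          rw [Finset.sum_const, nsmul_eq_mul]
  have hcard : (i.divisors.card : ℝ) ≤ C₁ * (n:ℝ)^(ε/2) := by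
    refine le_trans (hC₁ i hi) ?_
    have : ((i:ℕ):ℝ) ^ (ε/2) ≤ ((n:ℕ):ℝ) ^ (ε/2) :=
      Real.rpow_le_rpow (Nat.cast_nonneg i) (by exact_mod_cast hin) (by positivity)
    nlinarith [Real.rpow_nonneg (Nat.cast_nonneg i) (ε/2)]
  have hone : (1:ℝ) ≤ (n:ℝ)^(ε/2) := Real.one_le_rpow hnR1 (by positivity)
  have hlog : 2 + Real.log n ≤ (2 + 2/ε) * (n:ℝ)^(ε/2) := by
    have hx : (0:ℝ) < (n:ℝ)^(ε/2) := by positivity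
    have h3 : Real.log ((n:ℝ)^(ε/2)) ≤ (n:ℝ)^(ε/2) := by
      linarith [Real.log_le_sub_one_of_pos hx]
    rw [Real.log_rpow hnR] at h3
    have heq : Real.log n = (2/ε) * (ε/2 * Real.log n) := by field_simp
    have h4 : Real.log n ≤ (2/ε) * (n:ℝ)^(ε/2) := by
      rw [heq]
      exact mul_le_mul_of_nonneg_left h3 (by positivity)
    have h5 : (2:ℝ) ≤ 2 * (n:ℝ)^(ε/2) := by linarith
    have h6 : (2/ε) * (n:ℝ)^(ε/2) + 2 * (n:ℝ)^(ε/2) = (2 + 2/ε) * (n:ℝ)^(ε/2) := by ring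
    linarith
  have hsq : (n:ℝ)^(ε/2) * (n:ℝ)^(ε/2) = (n:ℝ)^ε := by
    rw [← Real.rpow_add hnR]
    norm_num
  calc _ ≤ (i.divisors.card : ℝ) * (2 + Real.log n) := h1
    _ ≤ (C₁ * (n:ℝ)^(ε/2)) * ((2 + 2/ε) * (n:ℝ)^(ε/2)) :=
        mul_le_mul hcard hlog (by linarith) (by positivity)
    _ = (C₁ * (2 + 2/ε)) * ((n:ℝ)^(ε/2) * (n:ℝ)^(ε/2)) := by ring
    _ = C₁ * (2 + 2/ε) * (n:ℝ)^ε := by rw [hsq]
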